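/- arXiv:math/0310206 — 3 statements merged into one kernel-verified Lean document; each statement's English description precedes it below -/
import Mathlib

section
/- Every k-shifted Hankel matrix of Catalan numbers H with entries H_{i,j} = Catalan(i+j+k) for 0 ≤ i, j < n is nonsingular; in fact its determinant is a positive integer for all k ≥ 0 and n ≥ 1. -/
/-!
Let `ballot L h` be the number of `±1` lattice paths with `L` steps from `0` to `h` that never go
below `0`; then `ballot (2 * m) 0 = catalan m`. Splitting a path of length `2 (i + j + k)` after
`2 i + k` steps and reversing the second piece gives
`catalan (i + j + k) = ∑ h, ballot (2 i + k) h * ballot (2 j + k) h`, i.e. `H = A Aᵀ` with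
`A i h = ballot (2 i + k) h`. The columns `h = 2 j + k` of `A` form a unitriangular matrix, so `A`
has full row rank and `H` is positive definite.
-/

open Finset Matrix

theorem Matrix.vecMul_injective_of_isUnit_submatrix {R m p : Type*} [CommRing R]
    [Fintype m] [DecidableEq m] [Fintype p] {A : Matrix m p R} (e : m → p)
    (hA : IsUnit (A.submatrix id e)) : Function.Injective A.vecMul := by
  intro x y hxy
  have hsub : ∀ z : m → R, z ᵥ* A.submatrix id e = (z ᵥ* A) ∘ e := fun _ => rfl
  exact vecMul_injective_of_isUnit hA (by simp only [hsub, hxy])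

namespace CatalanHankel

def ballot : ℕ → ℕ → ℕ
  | 0, 0 => 1
  | 0, _ + 1 => 0
  | L + 1, 0 => ballot L 1
  | L + 1, h + 1 => ballot L h + ballot L (h + 2)

theorem ballot_succ_zero (L : ℕ) : ballot (L + 1) 0 = ballot L 1 := rfl

theorem ballot_succ_succ (L h : ℕ) : ballot (L + 1) (h + 1) = ballot L h + ballot L (h + 2) :=
  rfl

theorem ballot_eq_zero_of_lt {L h : ℕ} (hlt : L < h) : ballot L h = 0 := by
  induction L generalizing h with
  | zero => obtain ⟨h, rfl⟩ := Nat.exists_eq_succ_of_ne_zero (by omega : h ≠ 0); rfl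
  | succ L ih =>
    obtain ⟨h, rfl⟩ := Nat.exists_eq_succ_of_ne_zero (by omega : h ≠ 0)
    rw [ballot_succ_succ, ih (by omega), ih (by omega)]

@[simp]
theorem ballot_self (L : ℕ) : ballot L L = 1 := by
  induction L with
  | zero => rfl
  | succ L ih => rw [ballot_succ_succ, ih, ballot_eq_zero_of_lt (by omega)]

/-- The reflection principle. -/
theorem ballot_add_two_mul (h j : ℕ) :
    (ballot (h + 2 * j) h : ℤ) = (h + 2 * j).choose j - (h + 2 * j).choose (h + j + 1) := by
  induction j generalizing h with
  | zero => simp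
  | succ j ihj =>
    induction h with
    | zero =>
      rw [show 0 + 2 * (j + 1) = (1 + 2 * j) + 1 by ring, ballot_succ_zero, ihj 1,
        Nat.choose_succ_succ', show 0 + (j + 1) + 1 = (j + 1) + 1 by ring, Nat.choose_succ_succ']
      push_cast
      ring_nf
    | succ h ihh =>
      have ihj' := ihj (h + 2)
      rw [show h + 2 + 2 * j = h + 2 * (j + 1) by ring] at ihj'
      rw [show h + 1 + 2 * (j + 1) = (h + 2 * (j + 1)) + 1 by ring, ballot_succ_succ,
        Nat.choose_succ_succ', show h + 1 + (j + 1) + 1 = (h + j + 2) + 1 by ring,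
        Nat.choose_succ_succ']
      push_cast
      rw [ihh, ihj']
      ring_nf

theorem catalan_eq_choose_sub_choose (m : ℕ) :
    (catalan m : ℤ) = (2 * m).choose m - (2 * m).choose (m + 1) := by
  have hcentral : ((m + 1) * catalan m : ℤ) = (2 * m).choose m := by
    exact_mod_cast succ_mul_catalan_eq_centralBinom m
  have hnext : ((2 * m).choose (m + 1) * (m + 1) : ℤ) = (2 * m).choose m * m := by
    have h := Nat.choose_succ_right_eq (2 * m) m
    rw [show 2 * m - m = m by omega] at h
    exact_mod_cast h
  refine mul_left_cancel₀ (by positivity : (m + 1 : ℤ) ≠ 0) ?_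
  linear_combination hcentral + hnext

theorem ballot_two_mul_zero (m : ℕ) : ballot (2 * m) 0 = catalan m := by
  have h := ballot_add_two_mul 0 m
  rw [zero_add, zero_add, ← catalan_eq_choose_sub_choose] at h
  exact_mod_cast h

theorem sum_range_succ_ballot_succ_mul (a b : ℕ) {N : ℕ} (ha : a ≤ N) :
    ∑ h ∈ range (N + 1), ballot (a + 1) h * ballot b h
      = ∑ h ∈ range N, (ballot a (h + 1) * ballot b h + ballot a h * ballot b (h + 1)) := by
  have hshift : ∑ h ∈ range N, ballot a (h + 2) * ballot b (h + 1) + ballot a 1 * ballot b 0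
      = ∑ h ∈ range N, ballot a (h + 1) * ballot b h := by
    rw [← sum_range_succ' (fun h => ballot a (h + 1) * ballot b h), sum_range_succ,
      ballot_eq_zero_of_lt (by omega : a < N + 1), zero_mul, add_zero]
  rw [sum_range_succ', ballot_succ_zero, sum_add_distrib, ← hshift]
  simp only [ballot_succ_succ, add_mul, sum_add_distrib]
  ring

theorem sum_range_succ_ballot_succ_mul_comm {a b N : ℕ} (ha : a ≤ N) (hb : b ≤ N) :
    ∑ h ∈ range (N + 1), ballot (a + 1) h * ballot b h
      = ∑ h ∈ range (N + 1), ballot a h * ballot (b + 1) h := by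
  calc ∑ h ∈ range (N + 1), ballot (a + 1) h * ballot b h
      = ∑ h ∈ range N, (ballot a (h + 1) * ballot b h + ballot a h * ballot b (h + 1)) :=
        sum_range_succ_ballot_succ_mul a b ha
    _ = ∑ h ∈ range N, (ballot b (h + 1) * ballot a h + ballot b h * ballot a (h + 1)) :=
        sum_congr rfl fun h _ => by ring
    _ = ∑ h ∈ range (N + 1), ballot (b + 1) h * ballot a h :=
        (sum_range_succ_ballot_succ_mul b a hb).symm
    _ = ∑ h ∈ range (N + 1), ballot a h * ballot (b + 1) h :=
        sum_congr rfl fun h _ => mul_comm _ _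

theorem sum_range_ballot_mul_ballot {a b N : ℕ} (hN : a + b < N) :
    ∑ h ∈ range N, ballot a h * ballot b h = ballot (a + b) 0 := by
  obtain ⟨N, rfl⟩ := Nat.exists_eq_add_one_of_ne_zero (by omega : N ≠ 0)
  induction b generalizing a with
  | zero =>
    rw [sum_eq_single_of_mem 0 (by simp), ballot_self, mul_one, add_zero]
    intro h _ hh
    rw [ballot_eq_zero_of_lt (by omega : 0 < h), mul_zero]
  | succ b ih =>
    rw [← sum_range_succ_ballot_succ_mul_comm (by omega) (by omega), ih (by omega)]
    ring_nf

-- Any number of columns exceeding `(2 i + k) + (2 j + k)` for all `i j < n` would do.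
def ballotMatrix (n k : ℕ) : Matrix (Fin n) (Fin (4 * n + 2 * k)) ℝ :=
  fun i h => ballot (2 * i + k) h

theorem ballotMatrix_mul_transpose (n k : ℕ) :
    ballotMatrix n k * (ballotMatrix n k)ᵀ =
      fun i j : Fin n => (catalan (i + j + k : ℕ) : ℝ) := by
  ext i j
  have hsum := sum_range_ballot_mul_ballot (a := 2 * i + k) (b := 2 * j + k) (N := 4 * n + 2 * k)
    (by omega)
  rw [show 2 * (i : ℕ) + k + (2 * j + k) = 2 * (i + j + k) by ring, ballot_two_mul_zero] at hsum
  rw [mul_apply, ← hsum, Nat.cast_sum, ← Fin.sum_univ_eq_sum_range]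
  simp [ballotMatrix]

def ballotPivot (n k : ℕ) (j : Fin n) : Fin (4 * n + 2 * k) :=
  ⟨2 * j + k, by omega⟩

theorem isUnit_ballotMatrix_submatrix (n k : ℕ) :
    IsUnit ((ballotMatrix n k).submatrix id (ballotPivot n k)) := by
  have htri : ((ballotMatrix n k).submatrix id (ballotPivot n k)).IsLowerTriangular :=
    fun i j hij => by
      have hlt : 2 * (i : ℕ) + k < 2 * j + k := by simpa using hij
      simp [ballotMatrix, ballotPivot, ballot_eq_zero_of_lt hlt]
  rw [isUnit_iff_isUnit_det, det_of_isLowerTriangular _ htri]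
  simp [ballotMatrix, ballotPivot]

end CatalanHankel

theorem catalan_hankel_det_pos_general (n k : ℕ) :
    0 < Matrix.det (fun i j : Fin n => (catalan ((i : ℕ) + (j : ℕ) + k) : ℤ)) := by
  have hinj := vecMul_injective_of_isUnit_submatrix _
    (CatalanHankel.isUnit_ballotMatrix_submatrix n k)
  have hpos : (0 : ℝ) < det fun i j : Fin n => (catalan ((i : ℕ) + (j : ℕ) + k) : ℝ) := by
    rw [← CatalanHankel.ballotMatrix_mul_transpose]
    simpa using (PosDef.mul_conjTranspose_self _ hinj).det_pos
  rw [← Int.cast_pos (R := ℝ)]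
  refine (Int.cast_det _).trans_gt (hpos.trans_eq ?_)
  congr with i j

/-- Every `k`-shifted Hankel matrix of Catalan numbers, with entries
`H_{i,j} = catalan (i+j+k)` for `0 ≤ i, j < n`, has positive determinant
(in particular it is nonsingular), for all `k ≥ 0` and `n ≥ 1`. -/
theorem catalan_hankel_det_pos (n k : ℕ) (hn : 1 ≤ n) :
    0 < Matrix.det (fun i j : Fin n => (catalan ((i : ℕ) + (j : ℕ) + k) : ℤ)) :=
  catalan_hankel_det_pos_general n k
end

section
/- τ_max(a₁·a₂···a_l) = ⟨∏_{j=1}^{l} p_{a_j}(t), ∑_{n≥2} Catalan(n−2) t^n⟩, assuming the Inclusion–Exclusion recurrence τ_max(a₁·a₂···a_l) = ∑_{k=0}^{⌊a₁/2⌋} (−1)^k C(a₁−k,k) τ_max(1^{a₁−k}·a₂···a_l), the cyclic-symmetry of τ_max, and the base case τ_max(1^n) = Catalan(n−2). -/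
open Polynomial

/-- The maximal edge-polynomial `p_n(t) = ∑_{k=0}^{⌊n/2⌋} (-1)^k C(n-k,k) t^{n-k}`. -/
noncomputable def edgePoly (n : ℕ) : Polynomial ℤ :=
  ∑ k ∈ Finset.range (n / 2 + 1),
    Polynomial.C ((-1) ^ k * (Nat.choose (n - k) k : ℤ)) * Polynomial.X ^ (n - k)

/-- Pairing of a polynomial with the Catalan generating series `∑_{m≥2} catalan(m-2) t^m`. -/
noncomputable def catalanPairing (q : Polynomial ℤ) : ℤ :=
  ∑ i ∈ q.support, q.coeff i * (if 2 ≤ i then (catalan (i - 2) : ℤ) else 0)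

private def gcat (i : ℕ) : ℤ := if 2 ≤ i then (catalan (i - 2) : ℤ) else 0

lemma cp_eq (q : Polynomial ℤ) (N : ℕ) (h : q.natDegree < N) :
    catalanPairing q = ∑ i ∈ Finset.range N, q.coeff i * gcat i := by
  unfold catalanPairing gcat
  refine Finset.sum_subset ?_ ?_
  · intro i hi
    exact Finset.mem_range.mpr (lt_of_le_of_lt (Polynomial.le_natDegree_of_mem_supp i hi) h)
  · intro i _ hi
    simp [Polynomial.notMem_support_iff.mp hi]

lemma edgePoly_one : edgePoly 1 = Polynomial.X := by
  simp [edgePoly]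

lemma natDegree_edgePoly_le (n : ℕ) : (edgePoly n).natDegree ≤ n := by
  refine Polynomial.natDegree_sum_le_of_forall_le _ _ fun k hk => ?_
  refine (Polynomial.natDegree_C_mul_le _ _).trans ?_
  simp [Nat.sub_le]

lemma cp_X_pow (n : ℕ) (h : 2 ≤ n) : catalanPairing (Polynomial.X ^ n) = (catalan (n-2) : ℤ) := by
  rw [cp_eq (Polynomial.X ^ n) (n+1) (by simp)]
  rw [Finset.sum_eq_single n]
  · simp [gcat, h]
  · intro i _ hin
    simp [Polynomial.coeff_X_pow, hin]
  · intro hn; exact absurd (Finset.self_mem_range_succ n) hn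

lemma cp_edgePoly_mul (a : ℕ) (Q : Polynomial ℤ) :
    catalanPairing (edgePoly a * Q) =
      ∑ k ∈ Finset.range (a/2+1),
        (-1)^k * (Nat.choose (a-k) k : ℤ) * catalanPairing (Polynomial.X^(a-k) * Q) := by
  set N := a + Q.natDegree + 1 with hN
  have hbound : ∀ k, k ≤ a/2 → (Polynomial.X^(a-k) * Q : Polynomial ℤ).natDegree < N := by
    intro k _
    refine lt_of_le_of_lt (Polynomial.natDegree_mul_le.trans ?_) (Nat.lt_succ_self _)
    simp [Nat.sub_le, Nat.add_le_add_right]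
  have hN1 : (edgePoly a * Q).natDegree < N := by
    refine lt_of_le_of_lt (Polynomial.natDegree_mul_le.trans ?_) (Nat.lt_succ_self _)
    exact Nat.add_le_add_right (natDegree_edgePoly_le a) _
  have expand : edgePoly a * Q = ∑ k ∈ Finset.range (a/2+1),
      Polynomial.C ((-1)^k * (Nat.choose (a-k) k : ℤ)) * (Polynomial.X^(a-k) * Q) := by
    rw [edgePoly, Finset.sum_mul]
    simp [mul_assoc]
  calc catalanPairing (edgePoly a * Q)
      = ∑ i ∈ Finset.range N, (edgePoly a * Q).coeff i * gcat i := cp_eq _ N hN1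
    _ = ∑ i ∈ Finset.range N, ∑ k ∈ Finset.range (a/2+1),
          ((-1)^k * (Nat.choose (a-k) k : ℤ)) * ((Polynomial.X^(a-k)*Q).coeff i * gcat i) := by
        refine Finset.sum_congr rfl fun i _ => ?_
        rw [expand, Polynomial.finset_sum_coeff, Finset.sum_mul]
        refine Finset.sum_congr rfl fun k _ => ?_
        rw [Polynomial.coeff_C_mul]; ring
    _ = ∑ k ∈ Finset.range (a/2+1), ((-1)^k * (Nat.choose (a-k) k : ℤ)) *
          ∑ i ∈ Finset.range N, (Polynomial.X^(a-k)*Q).coeff i * gcat i := by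
        rw [Finset.sum_comm]
        simp [Finset.mul_sum]
    _ = _ := by
        refine Finset.sum_congr rfl fun k hk => ?_
        rw [cp_eq _ N (hbound k (Nat.lt_succ_iff.mp (Finset.mem_range.mp hk)))]

/-- The closed formula `τ_max(a₁⋯a_l) = ⟨∏_j p_{a_j}(t), ∑_{n≥2} catalan(n−2) t^n⟩`,
for an abstract triangulation-counting function `τ` on weight sequences satisfying
(i) invariance under cyclic rotation, (ii) the Inclusion–Exclusion recurrence
expanding the first weight, and (iii) `τ(1^n) = catalan (n−2)`. -/
theorem maximal_triangulation_formula
    (τ : List ℕ → ℤ)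
    (hrot : ∀ l : List ℕ, τ (l.rotate 1) = τ l)
    (hrec : ∀ (a : ℕ) (l : List ℕ), 1 ≤ a → 3 ≤ (a :: l).length →
      τ (a :: l) = ∑ k ∈ Finset.range (a / 2 + 1),
        (-1) ^ k * (Nat.choose (a - k) k : ℤ) * τ (List.replicate (a - k) 1 ++ l))
    (hbase : ∀ n : ℕ, 3 ≤ n → τ (List.replicate n 1) = (catalan (n - 2) : ℤ)) :
    ∀ l : List ℕ, 3 ≤ l.length → (∀ a ∈ l, 1 ≤ a) →
      τ l = catalanPairing ((l.map edgePoly).prod) := by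
  have hrotn : ∀ (k : ℕ) (l : List ℕ), τ (l.rotate k) = τ l := by
    intro k
    induction k with
    | zero => simp
    | succ n ih =>
      intro l
      have h1 : l.rotate (n + 1) = (l.rotate 1).rotate n := by
        rw [List.rotate_rotate, Nat.add_comm]
      rw [h1, ih, hrot]
  suffices H : ∀ m (l : List ℕ), l.countP (fun a => decide (2 ≤ a)) = m →
      3 ≤ l.length → (∀ a ∈ l, 1 ≤ a) →
      τ l = catalanPairing ((l.map edgePoly).prod) by
    intro l h1 h2; exact H _ l rfl h1 h2
  intro m
  induction m with
  | zero =>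
    intro l hc hlen hpos
    have hall : ∀ a ∈ l, a = 1 := by
      intro a ha
      have h2 := List.countP_eq_zero.mp hc a ha
      have h3 := hpos a ha
      simp only [decide_eq_true_eq] at h2
      omega
    have hrep : l = List.replicate l.length 1 := List.eq_replicate_iff.mpr ⟨rfl, hall⟩
    rw [hrep, hbase _ (by rw [hrep, List.length_replicate] at hlen ⊢; exact hlen)]
    rw [List.map_replicate, edgePoly_one, List.prod_replicate, cp_X_pow _ (by omega)]
  | succ m ih =>
    intro l hc hlen hpos
    obtain ⟨a, ha, h2a⟩ : ∃ a ∈ l, 2 ≤ a := by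
      by_contra h
      push_neg at h
      have : l.countP (fun a => decide (2 ≤ a)) = 0 :=
        List.countP_eq_zero.mpr (by intro b hb; simpa using h b hb)
      omega
    obtain ⟨s, t0, hst⟩ := List.append_of_mem ha
    set t : List ℕ := t0 ++ s with ht
    have hslen : s.length ≤ l.length := by rw [hst]; simp
    have hrotl : l.rotate s.length = a :: t := by
      rw [hst, List.rotate_eq_drop_append_take (by simpa using hslen),
        List.drop_left, List.take_left]
      simp [ht]
    have hperm : (a :: t).Perm l := hrotl ▸ List.rotate_perm l s.length
    have hτ : τ l = τ (a :: t) := by rw [← hrotl, hrotn]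
    have hprod : ((a :: t).map edgePoly).prod = (l.map edgePoly).prod :=
      List.Perm.prod_eq (hperm.map edgePoly)
    have hcount : t.countP (fun a => decide (2 ≤ a)) = m := by
      have h1 : (a :: t).countP (fun a => decide (2 ≤ a)) = m + 1 := by
        rw [hperm.countP_eq]; exact hc
      rw [List.countP_cons] at h1
      simp only [decide_eq_true_eq, h2a, if_pos] at h1
      omega
    have hlen' : (a :: t).length = l.length := hperm.length_eq
    have hmemt : ∀ b ∈ t, 1 ≤ b := fun b hb => hpos b (hperm.mem_iff.mp (List.mem_cons_of_mem a hb))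
    rw [hτ, hrec a t (by omega) (by omega), ← hprod]
    have hQ : ((a :: t).map edgePoly).prod = edgePoly a * (t.map edgePoly).prod := by simp
    rw [hQ, cp_edgePoly_mul]
    refine Finset.sum_congr rfl fun k hk => ?_
    have hk' : k ≤ a / 2 := Nat.lt_succ_iff.mp (Finset.mem_range.mp hk)
    have hrepl : τ (List.replicate (a - k) 1 ++ t) =
        catalanPairing (((List.replicate (a - k) 1 ++ t).map edgePoly).prod) := by
      apply ih
      · rw [List.countP_append, hcount]
        have : (List.replicate (a - k) 1).countP (fun a => decide (2 ≤ a)) = 0 :=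
          List.countP_eq_zero.mpr (by intro b hb; simp [List.eq_of_mem_replicate hb])
        omega
      · have : (a :: t).length = t.length + 1 := by simp
        simp only [List.length_append, List.length_replicate]
        omega
      · intro b hb
        rcases List.mem_append.mp hb with hb | hb
        · simp [List.eq_of_mem_replicate hb]
        · exact hmemt b hb
    rw [hrepl]
    congr 1
    rw [List.map_append, List.prod_append, List.map_replicate, edgePoly_one,
      List.prod_replicate]
end

section
/- There are exactly 2^{n−1} equivalence classes of convex n-near-edges, encoded by sign vectors (ε₁,...,ε_{n−1}) ∈ {±1}^{n−1}; concretely, for each such sign vector the points P_i = (i, ε_i·i(n−i)) for 0 < i < n together with P₀ = (0,0) and P_n = (n,0) are in convex position (all n+1 points are vertices of their convex hull). -/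
/-! Every `P_j` lies between the parabolas `y = ± x(n − x)`, and `P_i` lies on the one of sign
`ε_i`. The tangent to that parabola at `P_i` has all other `P_j` strictly on its inner side,
since the parabola is strictly concave (resp. convex); so the linear functional
`(x, y) ↦ ε_i y − (n − 2i) x` takes the value `i²` at `P_i` and is `< i²` at every other
point. -/

/-- The points of the standard convex `n`-near-edge associated to a sign vector `ε`:
`P_i = (i, ε_i · i·(n−i))`. -/
noncomputable def nearEdgePt (n : ℕ) (ε : ℕ → ℤ) (i : ℕ) : ℝ × ℝ :=
  ((i : ℝ), (ε i : ℝ) * (i : ℝ) * ((n : ℝ) - (i : ℝ)))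

theorem notMem_convexHull_of_lt_linearMap {𝕜 E : Type*} [Field 𝕜] [LinearOrder 𝕜]
    [IsStrictOrderedRing 𝕜] [AddCommGroup E] [Module 𝕜 E] (φ : E →ₗ[𝕜] 𝕜) {s : Set E} {x : E}
    (h : ∀ y ∈ s, φ y < φ x) : x ∉ convexHull 𝕜 s := fun hx =>
  lt_irrefl (φ x) (convexHull_min h (convex_halfSpace_lt φ.isLinear (φ x)) hx)

theorem mul_sub_lt_tangent {n a x : ℝ} (hx : x ≠ a) :
    x * (n - x) < (n - 2 * a) * x + a ^ 2 := by
  have hgap : 0 < (x - a) ^ 2 := by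
    have : x - a ≠ 0 := sub_ne_zero.mpr hx
    positivity
  linear_combination hgap

section NearEdge

variable (n : ℕ) (ε : ℕ → ℤ)

noncomputable def nearEdgeTangent (i : ℕ) : ℝ × ℝ →ₗ[ℝ] ℝ :=
  (ε i : ℝ) • LinearMap.snd ℝ ℝ ℝ - ((n : ℝ) - 2 * i) • LinearMap.fst ℝ ℝ ℝ

theorem nearEdgeTangent_apply (i : ℕ) (p : ℝ × ℝ) :
    nearEdgeTangent n ε i p = ε i * p.2 - ((n : ℝ) - 2 * i) * p.1 :=
  rfl

variable {ε} (hε : ∀ i, ε i = 1 ∨ ε i = -1)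
include hε

theorem nearEdgeTangent_apply_self (i : ℕ) :
    nearEdgeTangent n ε i (nearEdgePt n ε i) = (i : ℝ) ^ 2 := by
  have hsq : (ε i : ℝ) * ε i = 1 := by
    rcases hε i with h | h <;> simp [h]
  simp only [nearEdgeTangent_apply, nearEdgePt]
  linear_combination (i * ((n : ℝ) - i)) * hsq

theorem nearEdgeTangent_apply_lt {i j : ℕ} (hj : j ≤ n) (hji : j ≠ i) :
    nearEdgeTangent n ε i (nearEdgePt n ε j) < (i : ℝ) ^ 2 := by
  have hjn : 0 ≤ (j : ℝ) * ((n : ℝ) - j) :=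
    mul_nonneg (Nat.cast_nonneg j) (sub_nonneg.mpr (by exact_mod_cast hj))
  have hsign : (ε i : ℝ) * ε j ≤ 1 := by
    rcases hε i with h | h <;> rcases hε j with h' | h' <;> norm_num [h, h']
  have hbelow : (ε i : ℝ) * ε j * (j * ((n : ℝ) - j)) ≤ j * ((n : ℝ) - j) :=
    mul_le_of_le_one_left hjn hsign
  have htangent := mul_sub_lt_tangent (n := (n : ℝ)) (Nat.cast_injective.ne hji)
  simp only [nearEdgeTangent_apply, nearEdgePt]
  linarith

end NearEdge

theorem convex_near_edge_convex_position_general (n : ℕ)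
    (ε : ℕ → ℤ) (hε : ∀ i, ε i = 1 ∨ ε i = -1) :
    ∀ i ≤ n, nearEdgePt n ε i ∉
      convexHull ℝ ((nearEdgePt n ε '' {j | j ≤ n}) \ {nearEdgePt n ε i}) := by
  intro i _
  refine notMem_convexHull_of_lt_linearMap (nearEdgeTangent n ε i) ?_
  rintro _ ⟨⟨j, hj, rfl⟩, hne⟩
  have hji : j ≠ i := fun h => hne (h ▸ rfl)
  rw [nearEdgeTangent_apply_self n hε]
  exact nearEdgeTangent_apply_lt n hε hj hji

/-- Convex near-edges are encoded by sign vectors: for any choice of signs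
`ε_i ∈ {±1}`, the `n+1` points `P_i = (i, ε_i·i·(n−i))`, `0 ≤ i ≤ n` (note
`P₀ = (0,0)` and `P_n = (n,0)`), are in strictly convex position: no point lies in
the convex hull of the others. -/
theorem convex_near_edge_convex_position (n : ℕ) (hn : 1 ≤ n)
    (ε : ℕ → ℤ) (hε : ∀ i, ε i = 1 ∨ ε i = -1) :
    ∀ i ≤ n, nearEdgePt n ε i ∉
      convexHull ℝ ((nearEdgePt n ε '' {j | j ≤ n}) \ {nearEdgePt n ε i}) :=
  convex_near_edge_convex_position_general n ε hε
end
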